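/- Let S be a gcd-closed set of n distinct positive integers with max_{x∈S} |G_S(x)| = 2, and let a ≥ 1. Then β_{a,k} ≠ 0 for every k with 1 ≤ k ≤ n; consequently the a-th power LCM matrix [S^a] (with entries lcm(x_i,x_j)^a) is nonsingular. -/

import Mathlib

/-!
By Möbius inversion `∑_{d ∣ m} (1/ξ_a * μ)(d) = m⁻ᵃ`; grouping the divisors of `gcd(x_i, x_j)`
by the least element of `S` they divide gives `(gcd(x_i, x_j)⁻ᵃ) = E diag(β) Eᵀ` with `E` the
unitriangular divisibility matrix of `S`, while `[S^a] = D (gcd(x_i, x_j)⁻ᵃ) D` with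
`D = diag(x_i^a)`. So `[S^a]` is nonsingular once every `β_{a,k}` is nonzero.

In a gcd-closed set a divisor of `x_k` divides some smaller element iff it divides a
greatest-type divisor of `x_k`, so by inclusion–exclusion `β_{a,k}` equals `x_k⁻ᵃ`,
`x_k⁻ᵃ - y⁻ᵃ < 0` or `x_k⁻ᵃ - y⁻ᵃ - z⁻ᵃ + gcd(y, z)⁻ᵃ > 0` when `G_S(x_k)` is empty, `{y}` or
`{y, z}`; the last sign holds because `y` and `z` are distinct proper multiples of `gcd(y, z)`.
-/

open ArithmeticFunction Finset Matrix
open scoped ArithmeticFunction.Moebius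

/-- The set of greatest-type divisors of `x` in `S`. -/
def GTD (S : Finset ℕ) (x : ℕ) : Finset ℕ :=
  S.filter (fun d => d < x ∧ d ∣ x ∧ ∀ y ∈ S, d ∣ y → y ∣ x → y = d ∨ y = x)

section MulMoebius

variable {R : Type*} [CommRing R]

/-- For `f e = e⁻ᵃ` this is the paper's `(1/ξ_a) * μ`. -/
def mulMoebius (f : ℕ → R) (d : ℕ) : R :=
  ∑ e ∈ d.divisors, f e * μ (d / e)

theorem sum_divisors_mulMoebius (f : ℕ → R) {m : ℕ} (hm : m ≠ 0) :
    ∑ d ∈ m.divisors, mulMoebius f d = f m := by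
  refine sum_eq_iff_sum_smul_moebius_eq.mpr (fun n _ => ?_) m (Nat.pos_of_ne_zero hm)
  rw [Nat.sum_divisorsAntidiagonal' (f := fun i j => μ i • f j)]
  exact sum_congr rfl fun d _ => by rw [zsmul_eq_mul, mul_comm]

theorem sum_divisors_filter_dvd_mulMoebius (f : ℕ → R) {m y : ℕ} (hm : m ≠ 0) (hy : y ∣ m) :
    ∑ d ∈ m.divisors with d ∣ y, mulMoebius f d = f y := by
  rw [Nat.divisors_filter_dvd_of_dvd hm hy,
    sum_divisors_mulMoebius f (ne_zero_of_dvd_ne_zero hm hy)]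

theorem sum_divisors_filter_not_dvd_mulMoebius (f : ℕ → R) {m y z : ℕ} (hm : m ≠ 0)
    (hy : y ∣ m) (hz : z ∣ m) :
    ∑ d ∈ m.divisors with ¬d ∣ y ∧ ¬d ∣ z, mulMoebius f d = f m - f y - f z + f (y.gcd z) := by
  have hunion := sum_union_inter (s₁ := {d ∈ m.divisors | d ∣ y})
    (s₂ := {d ∈ m.divisors | d ∣ z}) (f := mulMoebius f)
  simp_rw [← filter_or, ← filter_and, ← Nat.dvd_gcd_iff] at hunion
  rw [sum_divisors_filter_dvd_mulMoebius f hm hy, sum_divisors_filter_dvd_mulMoebius f hm hz,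
    sum_divisors_filter_dvd_mulMoebius f hm ((Nat.gcd_dvd_left y z).trans hy)] at hunion
  have hsplit := sum_filter_not_add_sum_filter m.divisors (fun d => d ∣ y ∨ d ∣ z) (mulMoebius f)
  simp only [not_or] at hsplit
  rw [sum_divisors_mulMoebius f hm] at hsplit
  linear_combination hsplit - hunion

end MulMoebius

section GreatestTypeDivisors

theorem mem_GTD {S : Finset ℕ} {x y : ℕ} :
    y ∈ GTD S x ↔ y ∈ S ∧ y < x ∧ y ∣ x ∧ ∀ z ∈ S, y ∣ z → z ∣ x → z = y ∨ z = x :=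
  mem_filter

variable {S : Finset ℕ}

theorem exists_mem_GTD_dvd (hpos : ∀ s ∈ S, 0 < s) {x m : ℕ} (hm : m ∈ S) (hmx : m ∣ x)
    (hlt : m < x) : ∃ y ∈ GTD S x, m ∣ y := by
  set T := {y ∈ S | m ∣ y ∧ y ∣ x ∧ y < x}
  have hT : T.Nonempty := ⟨m, mem_filter.mpr ⟨hm, dvd_rfl, hmx, hlt⟩⟩
  obtain ⟨hyS, hmy, hyx, hylt⟩ := mem_filter.mp (T.max'_mem hT)
  refine ⟨T.max' hT, mem_GTD.mpr ⟨hyS, hylt, hyx, fun z hz hyz hzx => ?_⟩, hmy⟩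
  rcases (Nat.le_of_dvd (by omega) hzx).lt_or_eq with hzlt | rfl
  · have hzT : z ∈ T := mem_filter.mpr ⟨hz, hmy.trans hyz, hzx, hzlt⟩
    exact .inl ((T.le_max' z hzT).antisymm (Nat.le_of_dvd (hpos z hz) hyz))
  · exact .inr rfl

/-- `β_{a,k}` is the sum of `(1/ξ_a) * μ` over `newDivisors S x_k`. -/
def newDivisors (S : Finset ℕ) (s : ℕ) : Finset ℕ :=
  {d ∈ s.divisors | ∀ t ∈ S, t < s → ¬d ∣ t}

/-- In a gcd-closed set a divisor of a smaller element `t` divides `gcd t x`, hence a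
greatest-type divisor of `x`. -/
theorem newDivisors_eq_filter_GTD (hpos : ∀ s ∈ S, 0 < s)
    (hgcd : ∀ s ∈ S, ∀ t ∈ S, s.gcd t ∈ S) {x : ℕ} (hx : x ∈ S) :
    newDivisors S x = {d ∈ x.divisors | ∀ y ∈ GTD S x, ¬d ∣ y} := by
  refine filter_congr fun d hd => ⟨fun h y hy => h y (mem_GTD.mp hy).1 (mem_GTD.mp hy).2.1,
    fun h t ht htx hdt => ?_⟩
  have hlt : t.gcd x < x := (Nat.le_of_dvd (hpos t ht) (Nat.gcd_dvd_left t x)).trans_lt htx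
  obtain ⟨y, hy, hgy⟩ := exists_mem_GTD_dvd hpos (hgcd t ht x hx) (Nat.gcd_dvd_right t x) hlt
  exact h y hy ((Nat.dvd_gcd hdt (Nat.dvd_of_mem_divisors hd)).trans hgy)

theorem gcd_lt_of_mem_GTD (hpos : ∀ s ∈ S, 0 < s) {x y z : ℕ} (hy : y ∈ GTD S x)
    (hz : z ∈ GTD S x) (hyz : y ≠ z) : y.gcd z < y := by
  obtain ⟨hyS, -, -, hymax⟩ := mem_GTD.mp hy
  obtain ⟨hzS, hzx, hzdvd, -⟩ := mem_GTD.mp hz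
  refine (Nat.le_of_dvd (hpos y hyS) (Nat.gcd_dvd_left y z)).lt_of_ne fun hg => ?_
  rcases hymax z hzS (hg ▸ Nat.gcd_dvd_right y z) hzdvd with h | h
  · exact hyz h.symm
  · omega

theorem pairwiseDisjoint_newDivisors : (S : Set ℕ).PairwiseDisjoint (newDivisors S) := by
  intro s hs t ht hst
  refine disjoint_left.mpr fun d hds hdt => ?_
  simp only [newDivisors, mem_filter, Nat.mem_divisors] at hds hdt
  rcases hst.lt_or_gt with h | h
  · exact hdt.2 s hs h hds.1.1
  · exact hds.2 t ht h hdt.1.1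

/-- Each divisor `d` of `g` is a new divisor of the least element of `S` it divides, and by
gcd-closedness that element divides `g`. -/
theorem biUnion_newDivisors (hpos : ∀ s ∈ S, 0 < s) (hgcd : ∀ s ∈ S, ∀ t ∈ S, s.gcd t ∈ S)
    {g : ℕ} (hg : g ∈ S) : {s ∈ S | s ∣ g}.biUnion (newDivisors S) = g.divisors := by
  ext d
  simp only [mem_biUnion, mem_filter, newDivisors, Nat.mem_divisors]
  constructor
  · rintro ⟨s, ⟨-, hsg⟩, ⟨hds, -⟩, -⟩
    exact ⟨hds.trans hsg, (hpos g hg).ne'⟩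
  · rintro ⟨hdg, -⟩
    set M := {s ∈ S | d ∣ s}
    have hM : M.Nonempty := ⟨g, mem_filter.mpr ⟨hg, hdg⟩⟩
    obtain ⟨hsS, hds⟩ := mem_filter.mp (M.min'_mem hM)
    set s := M.min' hM
    have hsg : s.gcd g = s := by
      have hmem : s.gcd g ∈ M := mem_filter.mpr ⟨hgcd s hsS g hg, Nat.dvd_gcd hds hdg⟩
      exact (Nat.le_of_dvd (hpos s hsS) (Nat.gcd_dvd_left s g)).antisymm (M.min'_le _ hmem)
    refine ⟨s, ⟨hsS, hsg ▸ Nat.gcd_dvd_right s g⟩, ⟨hds, (hpos s hsS).ne'⟩,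
      fun t ht hts hdt => ?_⟩
    exact (M.min'_le t (mem_filter.mpr ⟨ht, hdt⟩)).not_gt hts

theorem sum_filter_dvd_sum_newDivisors {M : Type*} [AddCommMonoid M] (F : ℕ → M)
    (hpos : ∀ s ∈ S, 0 < s) (hgcd : ∀ s ∈ S, ∀ t ∈ S, s.gcd t ∈ S) {g : ℕ} (hg : g ∈ S) :
    ∑ s ∈ S with s ∣ g, ∑ d ∈ newDivisors S s, F d = ∑ d ∈ g.divisors, F d := by
  rw [← biUnion_newDivisors hpos hgcd hg,
    sum_biUnion (pairwiseDisjoint_newDivisors.subset (coe_subset.mpr (filter_subset _ _)))]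

end GreatestTypeDivisors

theorem inv_pow_le_half_inv_pow {a g y : ℕ} (ha : 0 < a) (hg : 0 < g) (h : 2 * g ≤ y) :
    ((y : ℚ) ^ a)⁻¹ ≤ ((g : ℚ) ^ a)⁻¹ / 2 := by
  have hg' : (0 : ℚ) < g := by exact_mod_cast hg
  have hy' : (0 : ℚ) < y := by exact_mod_cast (by omega : 0 < y)
  rw [div_eq_mul_inv, ← mul_inv, inv_le_inv₀ (by positivity) (by positivity)]
  calc (g : ℚ) ^ a * 2 ≤ (g : ℚ) ^ a * 2 ^ a := by
        gcongr; exact le_self_pow₀ (by norm_num) ha.ne'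
    _ = ((2 * g : ℕ) : ℚ) ^ a := by push_cast; ring
    _ ≤ (y : ℚ) ^ a := by gcongr

/-- Of two distinct proper multiples of `g` the smaller is at least `2g`, the larger
exceeds it. -/
theorem inv_pow_add_inv_pow_lt_of_dvd {a g y z : ℕ} (ha : 0 < a) (hg : 0 < g) (hgy : g ∣ y)
    (hgz : g ∣ z) (hy : g < y) (hz : g < z) (hyz : y ≠ z) :
    ((y : ℚ) ^ a)⁻¹ + ((z : ℚ) ^ a)⁻¹ < ((g : ℚ) ^ a)⁻¹ := by
  wlog hlt : y < z generalizing y z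
  · linarith [this hgz hgy hz hy hyz.symm (by omega)]
  have h2y : 2 * g ≤ y := by
    obtain ⟨u, rfl⟩ := hgy
    have : 2 ≤ u := by
      by_contra! hu
      interval_cases u <;> omega
    nlinarith
  have hzy : ((z : ℚ) ^ a)⁻¹ < ((y : ℚ) ^ a)⁻¹ := by
    have hy' : (0 : ℚ) < y := by exact_mod_cast (by omega : 0 < y)
    apply inv_strictAnti₀ (by positivity)
    exact pow_lt_pow_left₀ (by exact_mod_cast hlt) (by positivity) ha.ne'
  linarith [inv_pow_le_half_inv_pow ha hg h2y]

theorem sum_newDivisors_mulMoebius_inv_pow_ne_zero {a : ℕ} (ha : 0 < a) {S : Finset ℕ}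
    (hpos : ∀ s ∈ S, 0 < s) (hgcd : ∀ s ∈ S, ∀ t ∈ S, s.gcd t ∈ S) {x : ℕ} (hx : x ∈ S)
    (hcard : #(GTD S x) ≤ 2) :
    ∑ d ∈ newDivisors S x, mulMoebius (fun e : ℕ => ((e : ℚ) ^ a)⁻¹) d ≠ 0 := by
  set f : ℕ → ℚ := fun e => ((e : ℚ) ^ a)⁻¹
  have hx0 : x ≠ 0 := (hpos x hx).ne'
  have hfx : 0 < f x := by positivity
  rw [newDivisors_eq_filter_GTD hpos hgcd hx]
  interval_cases h : #(GTD S x)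
  · rw [card_eq_zero.mp h, filter_true_of_mem (by simp), sum_divisors_mulMoebius f hx0]
    exact hfx.ne'
  · obtain ⟨y, hG⟩ := card_eq_one.mp h
    obtain ⟨hyS, hyx, hydvd, -⟩ := mem_GTD.mp (hG ▸ mem_singleton_self y)
    have hfy : f x < f y := by
      have hy' : (0 : ℚ) < y := by exact_mod_cast hpos y hyS
      exact inv_strictAnti₀ (by positivity) (pow_lt_pow_left₀ (by exact_mod_cast hyx)
        hy'.le ha.ne')
    have key := sum_divisors_filter_not_dvd_mulMoebius f hx0 hydvd hydvd
    rw [Nat.gcd_self] at key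
    rw [hG, filter_congr (q := fun d => ¬d ∣ y ∧ ¬d ∣ y) (by simp), key]
    linarith
  · obtain ⟨y, z, hyz, hG⟩ := card_eq_two.mp h
    have hy : y ∈ GTD S x := by simp [hG]
    have hz : z ∈ GTD S x := by simp [hG]
    obtain ⟨hyS, -, hydvd, -⟩ := mem_GTD.mp hy
    obtain ⟨hzS, -, hzdvd, -⟩ := mem_GTD.mp hz
    have hfg : f y + f z < f (y.gcd z) := inv_pow_add_inv_pow_lt_of_dvd ha
      (Nat.gcd_pos_of_pos_left z (hpos y hyS)) (Nat.gcd_dvd_left y z) (Nat.gcd_dvd_right y z)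
      (gcd_lt_of_mem_GTD hpos hy hz hyz)
      (Nat.gcd_comm y z ▸ gcd_lt_of_mem_GTD hpos hz hy hyz.symm) hyz
    rw [hG, filter_congr (q := fun d => ¬d ∣ y ∧ ¬d ∣ z) (by simp),
      sum_divisors_filter_not_dvd_mulMoebius f hx0 hydvd hzdvd]
    linarith

section LcmMatrix

variable {ι : Type*} [Fintype ι] [DecidableEq ι]

def divisibilityMatrix (R : Type*) [Zero R] [One R] (x : ι → ℕ) : Matrix ι ι R :=
  of fun i k => if x k ∣ x i then 1 else 0

/-- Ordering `ι` along `x` makes the matrix lower unitriangular. -/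
theorem det_divisibilityMatrix (R : Type*) [CommRing R] {x : ι → ℕ}
    (hinj : Function.Injective x) (hpos : ∀ i, 0 < x i) :
    (divisibilityMatrix R x).det = 1 := by
  let _ : LinearOrder ι := LinearOrder.lift' x hinj
  rw [det_of_isLowerTriangular _ fun i k (hik : x i < x k) => ?_]
  · simp [divisibilityMatrix]
  · simp [divisibilityMatrix, Nat.not_dvd_of_pos_of_lt (hpos i) hik]

theorem of_gcd_eq_divisibilityMatrix_mul {R : Type*} [CommRing R] (x : ι → ℕ) (f : ℕ → R)
    (β : ι → R)
    (hsum : ∀ i j, ∑ k with x k ∣ (x i).gcd (x j), β k = f ((x i).gcd (x j))) :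
    of (fun i j => f ((x i).gcd (x j))) =
      divisibilityMatrix R x * diagonal β * (divisibilityMatrix R x)ᵀ := by
  ext i j
  rw [Matrix.mul_apply, of_apply, ← hsum, sum_filter]
  refine sum_congr rfl fun k _ => ?_
  simp only [mul_diagonal, transpose_apply, divisibilityMatrix, of_apply, Nat.dvd_gcd_iff]
  split_ifs <;> simp_all

theorem of_lcm_pow_eq_diagonal_mul (a : ℕ) {x : ι → ℕ} (hpos : ∀ i, 0 < x i) :
    (of fun i j => ((x i).lcm (x j) : ℚ) ^ a) =
      diagonal (fun i => (x i : ℚ) ^ a) * of (fun i j => (((x i).gcd (x j) : ℚ) ^ a)⁻¹) *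
        diagonal (fun i => (x i : ℚ) ^ a) := by
  ext i j
  have hgcd : ((x i).gcd (x j) : ℚ) ≠ 0 := by
    exact_mod_cast (Nat.gcd_pos_of_pos_left _ (hpos i)).ne'
  have hlcm : ((x i).lcm (x j) : ℚ) = x i * x j / (x i).gcd (x j) := by
    rw [eq_div_iff hgcd, mul_comm]
    exact_mod_cast Nat.gcd_mul_lcm (x i) (x j)
  rw [mul_diagonal, diagonal_mul, of_apply, of_apply, hlcm, div_pow, mul_pow]
  ring

theorem det_of_lcm_pow_ne_zero (a : ℕ) {x : ι → ℕ} (hinj : Function.Injective x)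
    (hpos : ∀ i, 0 < x i) (β : ι → ℚ) (hβ : ∀ k, β k ≠ 0)
    (hsum : ∀ i j, ∑ k with x k ∣ (x i).gcd (x j), β k = (((x i).gcd (x j) : ℚ) ^ a)⁻¹) :
    (of fun i j => ((x i).lcm (x j) : ℚ) ^ a).det ≠ 0 := by
  have hx : ∀ i, (x i : ℚ) ^ a ≠ 0 := fun i => pow_ne_zero a (by exact_mod_cast (hpos i).ne')
  rw [of_lcm_pow_eq_diagonal_mul a hpos,
    of_gcd_eq_divisibilityMatrix_mul x (fun g => ((g : ℚ) ^ a)⁻¹) β hsum]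
  simp only [det_mul, det_transpose, det_divisibilityMatrix ℚ hinj hpos, det_diagonal, mul_one,
    one_mul]
  exact mul_ne_zero (mul_ne_zero (prod_ne_zero_iff.mpr fun i _ => hx i)
    (prod_ne_zero_iff.mpr fun i _ => hβ i)) (prod_ne_zero_iff.mpr fun i _ => hx i)

end LcmMatrix

theorem stmt_7_general (n : ℕ) (a : ℕ) (ha : 0 < a)
    (x : Fin n → ℕ) (hinj : Function.Injective x) (hpos : ∀ i, 0 < x i)
    (S : Finset ℕ) (hS : S = Finset.image x Finset.univ)
    (hgcd : ∀ s ∈ S, ∀ t ∈ S, Nat.gcd s t ∈ S)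
    (hmax : S.sup (fun s => (GTD S s).card) = 2)
    (β : Fin n → ℚ)
    (hβ : ∀ k, β k =
      ∑ d ∈ (x k).divisors.filter (fun d => ∀ t, x t < x k → ¬ d ∣ x t),
        ∑ e ∈ d.divisors, ((e : ℚ) ^ a)⁻¹ * (μ (d / e))) :
    (∀ k, β k ≠ 0) ∧
    (Matrix.of fun i j : Fin n => ((Nat.lcm (x i) (x j) : ℚ)) ^ a).det ≠ 0 := by
  subst hS
  have hposS : ∀ s ∈ univ.image x, 0 < s := by simpa using hpos
  have hβS : ∀ k, β k =
      ∑ d ∈ newDivisors (univ.image x) (x k), mulMoebius (fun e : ℕ => ((e : ℚ) ^ a)⁻¹) d := by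
    intro k
    simp [hβ k, newDivisors, mulMoebius]
  have hβne : ∀ k, β k ≠ 0 := fun k => hβS k ▸
    sum_newDivisors_mulMoebius_inv_pow_ne_zero ha hposS hgcd (mem_image_of_mem x (mem_univ k))
      (hmax ▸ le_sup (f := fun s => #(GTD _ s)) (mem_image_of_mem x (mem_univ k)))
  refine ⟨hβne, det_of_lcm_pow_ne_zero a hinj hpos β hβne fun i j => ?_⟩
  have hg : (x i).gcd (x j) ∈ univ.image x :=
    hgcd _ (mem_image_of_mem x (mem_univ i)) _ (mem_image_of_mem x (mem_univ j))
  rw [← sum_divisors_mulMoebius (fun e : ℕ => ((e : ℚ) ^ a)⁻¹) (hposS _ hg).ne',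
    ← sum_filter_dvd_sum_newDivisors _ hposS hgcd hg,
    filter_image, sum_image hinj.injOn]
  exact sum_congr rfl fun k _ => hβS k

theorem stmt_7 (n : ℕ) (hn : 0 < n) (a : ℕ) (ha : 0 < a)
    (x : Fin n → ℕ) (hinj : Function.Injective x) (hpos : ∀ i, 0 < x i)
    (S : Finset ℕ) (hS : S = Finset.image x Finset.univ)
    (hgcd : ∀ s ∈ S, ∀ t ∈ S, Nat.gcd s t ∈ S)
    (hmax : S.sup (fun s => (GTD S s).card) = 2)
    (β : Fin n → ℚ)
    (hβ : ∀ k, β k =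
      ∑ d ∈ (x k).divisors.filter (fun d => ∀ t, x t < x k → ¬ d ∣ x t),
        ∑ e ∈ d.divisors, ((e : ℚ) ^ a)⁻¹ * (μ (d / e))) :
    (∀ k, β k ≠ 0) ∧
    (Matrix.of fun i j : Fin n => ((Nat.lcm (x i) (x j) : ℚ)) ^ a).det ≠ 0 :=
  stmt_7_general n a ha x hinj hpos S hS hgcd hmax β hβ
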